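/- arXiv:1710.04501 — 2 statements merged into one kernel-verified Lean document; each statement's English description precedes it below -/
import Mathlib

section
/- The transformations g3 and g7 satisfy the relation g3 ∘ g7 ∘ g3^{-1} = g7^2; consequently the group generated by g3 and g7 is a non-abelian group of order 21. -/
open Complex

noncomputable def xi : ℂ := Complex.exp (2 * Real.pi * Complex.I / 7)

def w7 : Fin 10 → ℕ := ![0, 6, 5, 3, 1, 2, 4, 1, 2, 4]

def tau : Fin 10 → Fin 10 := ![0, 2, 3, 1, 5, 6, 4, 8, 9, 7]

noncomputable def sigmaPerm : Equiv.Perm (Fin 10) := Equiv.ofBijective tau (by decide)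

/-- `g7` as a bijective transformation of `ℂ^10`. -/
noncomputable def g7e : Equiv.Perm (Fin 10 → ℂ) :=
  Equiv.piCongrRight fun i =>
    Equiv.mulLeft₀ (xi ^ w7 i) (pow_ne_zero _ (Complex.exp_ne_zero _))

/-- `g3` as a bijective transformation of `ℂ^10`, `u ↦ u ∘ tau`. -/
noncomputable def g3e : Equiv.Perm (Fin 10 → ℂ) := Equiv.arrowCongr sigmaPerm.symm (Equiv.refl ℂ)

/-! Conjugation by `g3` permutes the coordinates so that each exponent of `ξ` in `g7` is doubled
modulo 7, whence `g3 g7 g3⁻¹ = g7²`. Hence `g3` normalizes the cyclic group `⟨g7⟩` of order 7,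
and `⟨g3, g7⟩ = ⟨g7⟩⟨g3⟩` has at most `7 · 3` elements; since both 3 and 7 divide its order, it
has exactly 21. It is non-abelian because `g7² ≠ g7`. -/

open Subgroup Pointwise

section MetacyclicGroup

variable {G : Type*} [Group G] {a b : G}

theorem zpowers_sq_eq_zpowers {n : ℕ} (hn : Odd n) (hb : b ^ n = 1) :
    zpowers (b ^ 2) = zpowers b := by
  obtain ⟨m, rfl⟩ := hn
  have hsq : (b ^ 2) ^ (m + 1) = b := by
    rw [← pow_mul, show 2 * (m + 1) = 2 * m + 1 + 1 by ring, pow_succ, hb, one_mul]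
  refine le_antisymm (zpowers_le.mpr (pow_mem (mem_zpowers b) 2)) (zpowers_le.mpr ?_)
  have hmem := pow_mem (mem_zpowers (b ^ 2)) (m + 1)
  rwa [hsq] at hmem

theorem mem_normalizer_zpowers_of_conj_eq_sq {n : ℕ} (hn : Odd n) (hb : b ^ n = 1)
    (hab : a * b * a⁻¹ = b ^ 2) : a ∈ normalizer (zpowers b) := by
  rw [mem_normalizer_iff_map_conj_eq, MonoidHom.map_zpowers]
  simpa [MulAut.conj_apply, hab] using zpowers_sq_eq_zpowers hn hb

theorem coe_closure_pair_eq_zpowers_mul_zpowers (h : a ∈ normalizer (zpowers b)) :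
    (closure {a, b} : Set G) = (zpowers b : Set G) * (zpowers a : Set G) := by
  rw [← coe_mul_of_right_le_normalizer_left _ _ (zpowers_le.mpr h), sup_comm,
    Set.insert_eq, Subgroup.closure_union, zpowers_eq_closure, zpowers_eq_closure]

theorem natCard_closure_pair_of_mem_normalizer {p q : ℕ} [hp : Fact p.Prime] [hq : Fact q.Prime]
    (hpq : p ≠ q) (ha : a ^ p = 1) (ha1 : a ≠ 1) (hb : b ^ q = 1) (hb1 : b ≠ 1)
    (h : a ∈ normalizer (zpowers b)) : Nat.card (closure {a, b}) = p * q := by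
  have hoa : orderOf a = p := orderOf_eq_prime ha ha1
  have hob : orderOf b = q := orderOf_eq_prime hb hb1
  have hcoe := coe_closure_pair_eq_zpowers_mul_zpowers h
  have : Finite (closure {a, b}) := by
    have hfin : (closure {a, b} : Set G).Finite := hcoe ▸
      (isOfFinOrder_iff_pow_eq_one.mpr ⟨q, hq.out.pos, hb⟩).finite_zpowers.mul
        (isOfFinOrder_iff_pow_eq_one.mpr ⟨p, hp.out.pos, ha⟩).finite_zpowers
    exact hfin.to_subtype
  have hle : Nat.card (closure {a, b}) ≤ q * p := by
    calc Nat.card (closure {a, b}) = Nat.card ((zpowers b : Set G) * (zpowers a : Set G)) := by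
          rw [← hcoe]; rfl
    _ ≤ Nat.card (zpowers b) * Nat.card (zpowers a) := Set.natCard_mul_le
    _ = q * p := by rw [Nat.card_zpowers, Nat.card_zpowers, hoa, hob]
  have hdvd : p * q ∣ Nat.card (closure {a, b}) := by
    refine Nat.Coprime.mul_dvd_of_dvd_of_dvd ((Nat.coprime_primes hp.out hq.out).mpr hpq) ?_ ?_
    · rw [← hoa, ← Nat.card_zpowers]
      exact card_dvd_of_le (zpowers_le.mpr (subset_closure (by simp)))
    · rw [← hob, ← Nat.card_zpowers]
      exact card_dvd_of_le (zpowers_le.mpr (subset_closure (by simp)))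
  exact le_antisymm (mul_comm p q ▸ hle) (Nat.le_of_dvd Nat.card_pos hdvd)

theorem not_commute_of_conj_eq_sq (hab : a * b * a⁻¹ = b ^ 2) (hb1 : b ≠ 1) : ¬ Commute a b := by
  intro hc
  rw [hc.eq, mul_inv_cancel_right, pow_two, left_eq_mul] at hab
  exact hb1 hab

end MetacyclicGroup

theorem isPrimitiveRoot_xi : IsPrimitiveRoot xi 7 := by
  simpa [xi] using Complex.isPrimitiveRoot_exp 7 (by norm_num)

theorem g3e_apply (u : Fin 10 → ℂ) (m : Fin 10) : g3e u m = u (tau m) := rfl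

theorem g7e_pow_apply (n : ℕ) (u : Fin 10 → ℂ) (m : Fin 10) :
    (g7e ^ n) u m = xi ^ (w7 m * n) * u m := by
  induction n generalizing u with
  | zero => simp
  | succ n ih =>
    rw [pow_succ, Equiv.Perm.mul_apply, ih]
    change xi ^ (w7 m * n) * (xi ^ w7 m * u m) = _
    ring

theorem g7e_pow_seven : g7e ^ 7 = 1 := by
  ext u m
  rw [g7e_pow_apply, pow_mul', isPrimitiveRoot_xi.pow_eq_one, one_pow, one_mul]
  rfl

theorem g7e_ne_one : g7e ≠ 1 := by
  intro h
  have h1 := congr_fun (DFunLike.congr_fun h 1) 1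
  rw [← pow_one g7e, g7e_pow_apply] at h1
  have hxi6 : xi ^ 6 = 1 := by simpa [w7] using h1
  exact isPrimitiveRoot_xi.pow_ne_one_of_pos_of_lt (by norm_num) (by norm_num) hxi6

theorem g3e_pow_three : g3e ^ 3 = 1 := by
  ext u m
  simp only [pow_succ, pow_zero, one_mul, Equiv.Perm.mul_apply, g3e_apply]
  fin_cases m <;> rfl

theorem g3e_mul_g7e_mul_inv : g3e * g7e * g3e⁻¹ = g7e ^ 2 := by
  refine mul_inv_eq_iff_eq_mul.mpr (Equiv.ext fun u => funext fun m => ?_)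
  have hw : w7 (tau m) = w7 m * 2 % 7 := by fin_cases m <;> rfl
  rw [Equiv.Perm.mul_apply, Equiv.Perm.mul_apply, g3e_apply, g7e_pow_apply, g3e_apply,
    ← pow_one g7e, g7e_pow_apply, mul_one, hw, ← pow_eq_pow_mod _ isPrimitiveRoot_xi.pow_eq_one]

/-- `g3 ∘ g7 ∘ g3⁻¹ = g7²`, and the group generated by `g3` and `g7` is a
non-abelian group of order `21`. -/
theorem g3_g7_relation_and_group_order :
    g3e * g7e * g3e⁻¹ = g7e ^ 2 ∧
    Nat.card (Subgroup.closure ({g3e, g7e} : Set (Equiv.Perm (Fin 10 → ℂ)))) = 21 ∧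
    ¬ (∀ a b : Subgroup.closure ({g3e, g7e} : Set (Equiv.Perm (Fin 10 → ℂ))),
        a * b = b * a) := by
  have hrel := g3e_mul_g7e_mul_inv
  have hnc : ¬ Commute g3e g7e := not_commute_of_conj_eq_sq hrel g7e_ne_one
  have : Fact (Nat.Prime 7) := ⟨by norm_num⟩
  refine ⟨hrel, ?_, fun hcomm => hnc ?_⟩
  · exact natCard_closure_pair_of_mem_normalizer (p := 3) (q := 7) (by norm_num) g3e_pow_three
      (fun h => hnc (h ▸ Commute.one_left g7e)) g7e_pow_seven g7e_ne_one
      (mem_normalizer_zpowers_of_conj_eq_sq (by decide) g7e_pow_seven hrel)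
  · exact congr_arg Subtype.val
      (hcomm ⟨g3e, subset_closure (by simp)⟩ ⟨g7e, subset_closure (by simp)⟩)
end

section
/- The polynomial eq_1 = (1 + i√7) U_1 U_2 U_3 + (3 + i√7) U_4 U_5 U_6 + 8 (U_1^2 U_5 + U_2^2 U_6 + U_3^2 U_4) is invariant under both g7 and g3, i.e., eq_1 ∘ g7 = eq_1 and eq_1 ∘ g3 = eq_1. -/
open Complex

noncomputable def g7 : (Fin 10 → ℂ) → (Fin 10 → ℂ) := fun u i => xi ^ w7 i * u i

def g3 : (Fin 10 → ℂ) → (Fin 10 → ℂ) := fun u i => u (tau i)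

/-- The cubic `eq₁`. -/
noncomputable def eq1 : (Fin 10 → ℂ) → ℂ := fun u =>
  (1 + Complex.I * Real.sqrt 7) * (u 1 * u 2 * u 3) +
  (3 + Complex.I * Real.sqrt 7) * (u 4 * u 5 * u 6) +
  8 * ((u 1) ^ 2 * u 5 + (u 2) ^ 2 * u 6 + (u 3) ^ 2 * u 4)

/-!
Every monomial of `eq1` has `g7`-weight divisible by 7 (the weights of `U₁U₂U₃`, `U₄U₅U₆`,
`U₁²U₅`, `U₂²U₆`, `U₃²U₄` are 14, 7, 14, 14, 7), so `g7` fixes each of them since `ξ⁷ = 1`.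
The permutation `g3` rotates `(U₁, U₂, U₃)` and `(U₄, U₅, U₆)` simultaneously, which permutes
the three monomials `U₁²U₅, U₂²U₆, U₃²U₄` and fixes the other two.
-/

lemma xi_pow_seven : xi ^ 7 = 1 := by
  rw [xi, ← Complex.exp_nat_mul, ← Complex.exp_two_pi_mul_I]
  congr 1
  push_cast
  ring

lemma eq1_g7 (u : Fin 10 → ℂ) : eq1 (g7 u) = eq1 u := by
  have weights : eq1 (g7 u) =
      (1 + I * Real.sqrt 7) * (xi ^ 7) ^ 2 * (u 1 * u 2 * u 3) +
      (3 + I * Real.sqrt 7) * xi ^ 7 * (u 4 * u 5 * u 6) +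
      8 * ((xi ^ 7) ^ 2 * (u 1 ^ 2 * u 5) + (xi ^ 7) ^ 2 * (u 2 ^ 2 * u 6) +
        xi ^ 7 * (u 3 ^ 2 * u 4)) := by
    simp only [eq1, g7, w7, Matrix.cons_val_one, Matrix.cons_val_zero, Matrix.cons_val, pow_one]
    ring
  rw [weights, xi_pow_seven]
  simp only [one_pow, mul_one, one_mul, eq1]

lemma eq1_g3 (u : Fin 10 → ℂ) : eq1 (g3 u) = eq1 u := by
  simp only [eq1, g3, tau, Matrix.cons_val_one, Matrix.cons_val_zero, Matrix.cons_val]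
  ring

/-- `eq₁` is invariant under both `g7` and `g3`. -/
theorem eq1_invariant : (∀ u, eq1 (g7 u) = eq1 u) ∧ (∀ u, eq1 (g3 u) = eq1 u) :=
  ⟨eq1_g7, eq1_g3⟩
end
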